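/- arXiv:cs/0604056 — 2 statements merged into one kernel-verified Lean document; each statement's English description precedes it below -/
import Mathlib

section
/- For every real z with 1 ≤ z ≤ 2, the integral ∫_{z−1}^{1} (1/4)·λ^(−1/2)·(z − λ)^(−1/2) dλ equals (1/2)·arcsin((2 − z)/z). Equivalently, with f(z) = (1/2)·z^(−1/2) for 0 < z < 1 and f(z) = 0 otherwise, (f ⋆ f)(z) = (1/2)·arcsin((2 − z)/z) for 1 ≤ z ≤ 2. -/
open MeasureTheory Real

/-- The density of `X²` for `X` uniform on `[-1,1]`:
`f z = (1/2) z^(-1/2)` for `0 < z < 1`, and `0` otherwise. -/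
noncomputable def f (z : ℝ) : ℝ :=
  if 0 < z ∧ z < 1 then (1 / 2) * z ^ (-(1 / 2) : ℝ) else 0

/-- Convolution of real functions: `(g ⋆ h)(z) = ∫ g λ · h (z − λ) dλ`. -/
noncomputable def conv (g h : ℝ → ℝ) (z : ℝ) : ℝ :=
  ∫ l, g l * h (z - l)

/-- `nconv n` is the `n`-fold convolution `f^{*n}` (for `n ≥ 1`):
`f^{*1} = f` and `f^{*(n+1)} = f^{*n} ⋆ f`. -/
noncomputable def nconv : ℕ → ℝ → ℝ
  | 0 => fun _ => 0
  | 1 => f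
  | (n + 2) => conv (nconv (n + 1)) f

lemma deriv_lemma_aux (z : ℝ) (hz : 0 < z) {l : ℝ} (h1 : 0 < l) (h2 : l < z) :
    HasDerivAt (fun l => (1 / 4) * Real.arcsin ((2 * l - z) / z))
      ((1 / 4) * l ^ (-(1 / 2) : ℝ) * (z - l) ^ (-(1 / 2) : ℝ)) l := by
  have hx1 : (2 * l - z) / z ≠ -1 := by
    intro h; rw [div_eq_iff hz.ne'] at h; nlinarith
  have hx2 : (2 * l - z) / z ≠ 1 := by
    intro h; rw [div_eq_iff hz.ne'] at h; nlinarith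
  have hinner : HasDerivAt (fun l : ℝ => (2 * l - z) / z) (2 / z) l := by
    simpa using (((hasDerivAt_id l).const_mul 2).sub_const z).div_const z
  have harcsin := Real.hasDerivAt_arcsin hx1 hx2
  have := (harcsin.comp l hinner).const_mul (1 / 4 : ℝ)
  refine this.congr_deriv (Eq.symm ?_)
  have key : 1 - ((2 * l - z) / z) ^ 2 = 4 * l * (z - l) / z ^ 2 := by
    field_simp; ring
  rw [key]
  have hzl : 0 < z - l := by linarith
  have e1 : Real.sqrt l ^ 2 = l := Real.sq_sqrt h1.le
  have e2 : Real.sqrt (z - l) ^ 2 = z - l := Real.sq_sqrt hzl.le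
  have hs : Real.sqrt (4 * l * (z - l) / z ^ 2) = 2 * Real.sqrt l * Real.sqrt (z - l) / z := by
    rw [show 4 * l * (z - l) / z ^ 2 = (2 * Real.sqrt l * Real.sqrt (z - l) / z) ^ 2 by
      rw [div_pow, mul_pow, mul_pow, e1, e2]; ring]
    exact Real.sqrt_sq (by positivity)
  have hl0 : Real.sqrt l ≠ 0 := by positivity
  have hzl0 : Real.sqrt (z - l) ≠ 0 := by positivity
  rw [hs, Real.rpow_neg h1.le, Real.rpow_neg hzl.le, ← Real.sqrt_eq_rpow, ← Real.sqrt_eq_rpow]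
  field_simp

lemma integrable_lemma_aux (z : ℝ) (hz1 : 1 ≤ z) (hz2 : z ≤ 2) :
    IntervalIntegrable (fun l => (1 / 4) * l ^ (-(1 / 2) : ℝ) * (z - l) ^ (-(1 / 2) : ℝ))
      volume (z - 1) 1 := by
  have hm : Measurable (fun l : ℝ => (1 / 4) * l ^ (-(1 / 2) : ℝ) * (z - l) ^ (-(1 / 2) : ℝ)) := by
    fun_prop
  have h12 : z - 1 ≤ z / 2 := by linarith
  have h21 : z / 2 ≤ 1 := by linarith
  have piece1 : IntervalIntegrable (fun l => (1 / 4) * l ^ (-(1 / 2) : ℝ) * (z - l) ^ (-(1 / 2) : ℝ))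
      volume (z - 1) (z / 2) := by
    apply IntervalIntegrable.mono_fun'
      (g := fun l => (1 / 4) * l ^ (-(1 / 2) : ℝ) * (1 / 2 : ℝ) ^ (-(1 / 2) : ℝ))
    · exact ((intervalIntegral.intervalIntegrable_rpow' (by norm_num)).const_mul _).mul_const _
    · exact hm.aestronglyMeasurable
    · filter_upwards [ae_restrict_mem measurableSet_uIoc] with l hl
      rw [Set.uIoc_of_le h12] at hl
      have hl0 : 0 < l := lt_of_le_of_lt (by linarith) hl.1
      have hzl : (1 : ℝ) / 2 ≤ z - l := by linarith [hl.2]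
      rw [Real.norm_eq_abs, abs_of_nonneg (by positivity)]
      exact mul_le_mul_of_nonneg_left
        (Real.rpow_le_rpow_of_nonpos (by norm_num) hzl (by norm_num)) (by positivity)
  have piece2 : IntervalIntegrable (fun l => (1 / 4) * l ^ (-(1 / 2) : ℝ) * (z - l) ^ (-(1 / 2) : ℝ))
      volume (z / 2) 1 := by
    apply IntervalIntegrable.mono_fun'
      (g := fun l => (1 / 4) * (1 / 2 : ℝ) ^ (-(1 / 2) : ℝ) * (z - l) ^ (-(1 / 2) : ℝ))
    · have := ((intervalIntegral.intervalIntegrable_rpow' (r := (-(1/2) : ℝ)) (by norm_num)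
        (a := z - z/2) (b := z - 1)).comp_sub_left z)
      simpa using this.const_mul ((1 / 4) * (1 / 2 : ℝ) ^ (-(1 / 2) : ℝ))
    · exact hm.aestronglyMeasurable
    · filter_upwards [ae_restrict_mem measurableSet_uIoc] with l hl
      rw [Set.uIoc_of_le h21] at hl
      have hl0 : (1 : ℝ) / 2 ≤ l := le_trans (by linarith) hl.1.le
      have hzl : 0 ≤ z - l := by linarith [hl.2]
      have hbase : (0:ℝ) ≤ (z - l) ^ (-(1 / 2) : ℝ) := Real.rpow_nonneg hzl _
      rw [Real.norm_eq_abs, abs_of_nonneg (by positivity)]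
      exact mul_le_mul_of_nonneg_right (mul_le_mul_of_nonneg_left
        (Real.rpow_le_rpow_of_nonpos (by norm_num) hl0 (by norm_num)) (by norm_num)) hbase
  exact piece1.trans piece2

lemma integral_part_aux (z : ℝ) (hz1 : 1 ≤ z) (hz2 : z ≤ 2) :
    (∫ l in (z - 1)..1, (1 / 4) * l ^ (-(1 / 2) : ℝ) * (z - l) ^ (-(1 / 2) : ℝ))
      = (1 / 2) * Real.arcsin ((2 - z) / z) := by
  have hab : z - 1 ≤ 1 := by linarith
  have hF := intervalIntegral.integral_eq_sub_of_hasDeriv_right_of_le hab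
    (f := fun l => (1 / 4) * Real.arcsin ((2 * l - z) / z))
    ((continuous_const.mul (Real.continuous_arcsin.comp (by continuity))).continuousOn)
    (fun x hx => (deriv_lemma_aux z (by linarith) (lt_of_le_of_lt (by linarith) hx.1)
      (by linarith [hx.2])).hasDerivWithinAt)
    (integrable_lemma_aux z hz1 hz2)
  rw [hF, show (2 * 1 - z) / z = (2 - z) / z by ring,
    show (2 * (z - 1) - z) / z = -((2 - z) / z) by ring, Real.arcsin_neg]
  ring

/-- For `1 ≤ z ≤ 2`, the integral `∫_{z−1}^1 (1/4)·λ^(−1/2)·(z−λ)^(−1/2) dλ` equals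
`(1/2)·arcsin((2−z)/z)`; equivalently, `(f ⋆ f)(z) = (1/2)·arcsin((2−z)/z)`. -/
theorem conv_f_f_eq_arcsin (z : ℝ) (hz1 : 1 ≤ z) (hz2 : z ≤ 2) :
    (∫ l in (z - 1)..1, (1 / 4) * l ^ (-(1 / 2) : ℝ) * (z - l) ^ (-(1 / 2) : ℝ))
        = (1 / 2) * Real.arcsin ((2 - z) / z) ∧
      conv f f z = (1 / 2) * Real.arcsin ((2 - z) / z) := by
  refine ⟨integral_part_aux z hz1 hz2, ?_⟩
  have heq : ∀ l, f l * f (z - l) = Set.indicator (Set.Ioo (z - 1) 1)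
      (fun l => (1 / 4) * l ^ (-(1 / 2) : ℝ) * (z - l) ^ (-(1 / 2) : ℝ)) l := by
    intro l
    rw [Set.indicator_apply]
    by_cases h : l ∈ Set.Ioo (z - 1) 1
    · have h1 : 0 < l := lt_of_le_of_lt (by linarith) h.1
      have h3 : 0 < z - l := by linarith [h.2]
      have h4 : z - l < 1 := by linarith [h.1]
      rw [if_pos h]; unfold f; rw [if_pos ⟨h1, h.2⟩, if_pos ⟨h3, h4⟩]; ring
    · rw [if_neg h]
      simp only [Set.mem_Ioo, not_and_or, not_lt] at h
      unfold f
      rcases h with h | h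
      · rw [if_neg (fun hc : 0 < z - l ∧ z - l < 1 => by linarith [hc.2]), mul_zero]
      · rw [if_neg (fun hc : 0 < l ∧ l < 1 => by linarith [hc.2]), zero_mul]
  unfold conv
  simp only [heq]
  rw [MeasureTheory.integral_indicator measurableSet_Ioo,
    ← MeasureTheory.integral_Ioc_eq_integral_Ioo,
    ← intervalIntegral.integral_of_le (by linarith : z - 1 ≤ 1)]
  exact integral_part_aux z hz1 hz2
end

section
/- For every natural number m ≥ 0 and every real z with 0 < z ≤ 1, the (2m+2)-fold convolution of f satisfies f^{*(2m+2)}(z) = (π/4)^(m+1)·z^m / m!. -/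
open MeasureTheory Real

lemma nconv_step (n : ℕ) : nconv (n + 2) = conv (nconv (n + 1)) f := rfl

lemma f_nonpos {l : ℝ} (h : l ≤ 0) : f l = 0 := by
  rw [f, if_neg]; push_neg; intro h'; linarith

lemma nconv_nonpos (n : ℕ) : ∀ l : ℝ, l ≤ 0 → nconv n l = 0 := by
  induction n using Nat.strong_induction_on with
  | _ n ih =>
    match n with
    | 0 => intro l _; rfl
    | 1 => intro l hl; exact f_nonpos hl
    | (k + 2) =>
      intro l hl
      rw [nconv_step, conv]
      have : ∀ x : ℝ, nconv (k + 1) x * f (l - x) = 0 := by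
        intro x
        rcases le_or_gt x 0 with h | h
        · rw [ih (k+1) (by omega) x h, zero_mul]
        · rw [f_nonpos (by linarith), mul_zero]
      simp [this]

lemma real_beta (a : ℝ) (ha : -1 < a) (z : ℝ) (hz : 0 < z) :
    ∫ x in (0:ℝ)..z, x ^ a * (z - x) ^ (-(1/2) : ℝ) =
      Real.Gamma (a + 1) * Real.Gamma (1/2) / Real.Gamma (a + 3/2) * z ^ (a + 1/2) := by
  have hGpos : 0 < Real.Gamma (a + 3/2) := Real.Gamma_pos_of_pos (by linarith)
  have hGne : (Complex.Gamma ((a:ℂ) + 3/2)) ≠ 0 := by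
    have : ((a:ℂ) + 3/2) = ((a + 3/2 : ℝ) : ℂ) := by push_cast; ring
    rw [this, Complex.Gamma_ofReal]
    exact_mod_cast hGpos.ne'
  have hs : 0 < Complex.re ((a:ℂ) + 1) := by
    simp only [Complex.add_re, Complex.ofReal_re, Complex.one_re]; linarith
  have ht : 0 < Complex.re (1/2 : ℂ) := by norm_num
  have hbeta := Complex.Gamma_mul_Gamma_eq_betaIntegral hs ht
  have hscaled := Complex.betaIntegral_scaled ((a:ℂ) + 1) (1/2) hz
  have coe : ((∫ x in (0:ℝ)..z, x ^ a * (z - x) ^ (-(1/2) : ℝ) : ℝ) : ℂ)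
      = ∫ x in (0:ℝ)..z, (x:ℂ) ^ (((a:ℂ) + 1) - 1) * ((z:ℂ) - x) ^ ((1/2 : ℂ) - 1) := by
    rw [← intervalIntegral.integral_ofReal]
    rw [intervalIntegral.integral_of_le hz.le, intervalIntegral.integral_of_le hz.le]
    refine setIntegral_congr_fun measurableSet_Ioc fun x hx => ?_
    have hx0 : (0:ℝ) ≤ x := hx.1.le
    have hzx : (0:ℝ) ≤ z - x := by linarith [hx.2]
    push_cast
    rw [Complex.ofReal_cpow hx0, Complex.ofReal_cpow hzx]
    push_cast
    norm_num
  have key : ((∫ x in (0:ℝ)..z, x ^ a * (z - x) ^ (-(1/2) : ℝ) : ℝ) : ℂ)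
      = ((Real.Gamma (a + 1) * Real.Gamma (1/2) / Real.Gamma (a + 3/2) * z ^ (a + 1/2) : ℝ) : ℂ) := by
    rw [coe, hscaled]
    have e1 : ((a:ℂ) + 1 + 1/2 - 1) = ((a + 1/2 : ℝ) : ℂ) := by push_cast; ring
    have e2 : ((a:ℂ) + 1 + 1/2) = ((a:ℂ) + 3/2) := by ring
    rw [e1, ← Complex.ofReal_cpow hz.le]
    rw [e2] at hbeta
    have hB : Complex.betaIntegral ((a:ℂ) + 1) (1/2)
        = Complex.Gamma ((a:ℂ) + 1) * Complex.Gamma (1/2) / Complex.Gamma ((a:ℂ) + 3/2) := by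
      rw [eq_div_iff hGne, hbeta, mul_comm]
    rw [hB]
    have g1 : Complex.Gamma ((a:ℂ) + 1) = ((Real.Gamma (a+1) : ℝ) : ℂ) := by
      rw [show ((a:ℂ) + 1) = ((a + 1 : ℝ) : ℂ) by push_cast; ring, Complex.Gamma_ofReal]
    have g2 : Complex.Gamma ((1:ℂ)/2) = ((Real.Gamma (1/2) : ℝ) : ℂ) := by
      rw [show ((1:ℂ)/2) = ((1/2 : ℝ) : ℂ) by push_cast; ring, Complex.Gamma_ofReal]
    have g3 : Complex.Gamma ((a:ℂ) + 3/2) = ((Real.Gamma (a + 3/2) : ℝ) : ℂ) := by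
      rw [show ((a:ℂ) + 3/2) = ((a + 3/2 : ℝ) : ℂ) by push_cast; ring, Complex.Gamma_ofReal]
    rw [g1, g2, g3]
    push_cast
    ring
  exact_mod_cast key

lemma conv_eval (g : ℝ → ℝ) (c a : ℝ) (ha : -1 < a)
    (hg0 : ∀ l : ℝ, l ≤ 0 → g l = 0) (hg : ∀ l : ℝ, 0 < l → l < 1 → g l = c * l ^ a)
    (z : ℝ) (hz0 : 0 < z) (hz1 : z ≤ 1) :
    conv g f z = c * (1/2) * (Real.Gamma (a + 1) * Real.Gamma (1/2) / Real.Gamma (a + 3/2))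
      * z ^ (a + 1/2) := by
  have key : ∀ l : ℝ, g l * f (z - l) =
      Set.indicator (Set.Ioo 0 z)
        (fun l => (c * (1/2)) * (l ^ a * (z - l) ^ (-(1/2) : ℝ))) l := by
    intro l
    by_cases h : l ∈ Set.Ioo 0 z
    · rw [Set.indicator_of_mem h]
      obtain ⟨h1, h2⟩ := h
      rw [hg l h1 (lt_of_lt_of_le h2 hz1), f, if_pos ⟨by linarith, by linarith⟩]
      norm_num
      ring
    · rw [Set.indicator_of_notMem h]
      rcases le_or_gt l 0 with h' | h'
      · rw [hg0 l h', zero_mul]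
      · have hlz : z ≤ l := by
          by_contra hc
          exact h ⟨h', lt_of_not_ge hc⟩
        rw [f_nonpos (by linarith), mul_zero]
  rw [conv]
  simp_rw [key]
  rw [MeasureTheory.integral_indicator measurableSet_Ioo,
      ← MeasureTheory.integral_Ioc_eq_integral_Ioo,
      ← intervalIntegral.integral_of_le hz0.le,
      intervalIntegral.integral_const_mul,
      real_beta a ha z hz0]
  ring

lemma main_ind (m : ℕ) :
    (∀ z : ℝ, 0 < z → z ≤ 1 →
      nconv (2 * m + 2) z = (π/4)^(m+1) / (m.factorial : ℝ) * z ^ (m : ℝ)) ∧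
    (∀ z : ℝ, 0 < z → z ≤ 1 →
      nconv (2 * m + 3) z = ((π/4)^(m+1) / (m.factorial : ℝ)) * (1/2)
        * (Real.Gamma ((m:ℝ) + 1) * Real.Gamma (1/2) / Real.Gamma ((m:ℝ) + 3/2))
        * z ^ ((m : ℝ) + 1/2)) := by
  have hf0 : ∀ l : ℝ, l ≤ 0 → f l = 0 := fun l hl => f_nonpos hl
  have hfeq : ∀ l : ℝ, 0 < l → l < 1 → f l = (1/2) * l ^ (-(1/2) : ℝ) := by
    intro l h1 h2; rw [f, if_pos ⟨h1, h2⟩]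
  have hQ : ∀ k : ℕ, (∀ z : ℝ, 0 < z → z ≤ 1 →
      nconv (2 * k + 2) z = (π/4)^(k+1) / (k.factorial : ℝ) * z ^ (k : ℝ)) →
      (∀ z : ℝ, 0 < z → z ≤ 1 →
      nconv (2 * k + 3) z = ((π/4)^(k+1) / (k.factorial : ℝ)) * (1/2)
        * (Real.Gamma ((k:ℝ) + 1) * Real.Gamma (1/2) / Real.Gamma ((k:ℝ) + 3/2))
        * z ^ ((k : ℝ) + 1/2)) := by
    intro k hP z hz0 hz1
    have hstep : nconv (2 * k + 3) z = conv (nconv (2 * k + 2)) f z := by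
      rw [show 2 * k + 3 = (2 * k + 1) + 2 from rfl, nconv_step]
    rw [hstep, conv_eval (nconv (2 * k + 2)) ((π/4)^(k+1) / (k.factorial : ℝ)) (k : ℝ)
      (by have := Nat.cast_nonneg (α := ℝ) k; linarith) (nconv_nonpos (2 * k + 2))
      (fun l h1 h2 => hP l h1 h2.le) z hz0 hz1]
  induction m with
  | zero =>
    have hP : ∀ z : ℝ, 0 < z → z ≤ 1 →
        nconv (2 * 0 + 2) z = (π/4)^(0+1) / (Nat.factorial 0 : ℝ) * z ^ ((0:ℕ) : ℝ) := by
      intro z hz0 hz1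
      have h2 : nconv (2 * 0 + 2) z = conv f f z := rfl
      rw [h2, conv_eval f (1/2) (-(1/2)) (by norm_num) hf0 hfeq z hz0 hz1]
      rw [show (-(1/2) + 1/2 : ℝ) = 0 by ring, show (-(1/2) + 1 : ℝ) = 1/2 by ring,
        show (-(1/2) + 3/2 : ℝ) = 1 by ring, Real.Gamma_one, Real.Gamma_one_half_eq]
      rw [show (((0:ℕ):ℝ)) = (0:ℝ) by norm_num, Real.rpow_zero]
      rw [Real.mul_self_sqrt Real.pi_pos.le]
      norm_num [Nat.factorial]
      ring
    exact ⟨hP, hQ 0 hP⟩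
  | succ k ih =>
    have hQk := hQ k ih.1
    have hP : ∀ z : ℝ, 0 < z → z ≤ 1 →
        nconv (2 * (k+1) + 2) z = (π/4)^(k+1+1) / ((k+1).factorial : ℝ) * z ^ ((k+1:ℕ) : ℝ) := by
      intro z hz0 hz1
      have hstep : nconv (2 * (k+1) + 2) z = conv (nconv (2 * k + 3)) f z := by
        rw [show 2 * (k+1) + 2 = (2 * k + 2) + 2 from rfl, nconv_step]
      rw [hstep, conv_eval (nconv (2 * k + 3))
        (((π/4)^(k+1) / (k.factorial : ℝ)) * (1/2)
          * (Real.Gamma ((k:ℝ) + 1) * Real.Gamma (1/2) / Real.Gamma ((k:ℝ) + 3/2)))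
        ((k:ℝ) + 1/2) (by have := Nat.cast_nonneg (α := ℝ) k; linarith) (nconv_nonpos (2 * k + 3))
        (fun l h1 h2 => hQk l h1 h2.le) z hz0 hz1]
      rw [show ((k:ℝ) + 1/2 + 1) = (k:ℝ) + 3/2 by ring,
        show ((k:ℝ) + 1/2 + 3/2) = (k:ℝ) + 2 by ring,
        show ((k:ℝ) + 1/2 + 1/2) = ((k+1:ℕ):ℝ) by push_cast; ring]
      have hG12 : Real.Gamma (1/2 : ℝ) = √π := Real.Gamma_one_half_eq
      have hGk1 : Real.Gamma ((k:ℝ) + 1) = (k.factorial : ℝ) := by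
        exact_mod_cast Real.Gamma_nat_eq_factorial k
      have hGk2 : Real.Gamma ((k:ℝ) + 2) = ((k+1).factorial : ℝ) := by
        rw [show ((k:ℝ) + 2) = (((k+1:ℕ)):ℝ) + 1 by push_cast; ring]
        exact_mod_cast Real.Gamma_nat_eq_factorial (k+1)
      have hGpos : 0 < Real.Gamma ((k:ℝ) + 3/2) := Real.Gamma_pos_of_pos (by positivity)
      have hπ : √π * √π = π := Real.mul_self_sqrt Real.pi_pos.le
      have hk1 : (0:ℝ) < (k.factorial : ℝ) := by positivity
      have hk2 : (0:ℝ) < ((k+1).factorial : ℝ) := by positivity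
      rw [hG12, hGk1, hGk2]
      have hcoef : (π/4)^(k+1) / (k.factorial:ℝ) * (1/2)
            * ((k.factorial:ℝ) * √π / Real.Gamma ((k:ℝ)+3/2)) * (1/2)
            * (Real.Gamma ((k:ℝ)+3/2) * √π / ((k+1).factorial:ℝ))
          = (π/4)^(k+1+1) / ((k+1).factorial:ℝ) := by
        have e1 : (π/4)^(k+1) / (k.factorial:ℝ) * (1/2)
              * ((k.factorial:ℝ) * √π / Real.Gamma ((k:ℝ)+3/2)) * (1/2)
              * (Real.Gamma ((k:ℝ)+3/2) * √π / ((k+1).factorial:ℝ))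
            = (√π * √π) * ((π/4)^(k+1)
              * (Real.Gamma ((k:ℝ)+3/2) / Real.Gamma ((k:ℝ)+3/2))
              * ((k.factorial:ℝ) / (k.factorial:ℝ)) * (1/4) / ((k+1).factorial:ℝ)) := by
          ring
        rw [e1, hπ, div_self hGpos.ne', div_self hk1.ne', pow_succ]
        ring
      rw [hcoef]
    exact ⟨hP, hQ (k+1) hP⟩

/-- For every `m : ℕ` and `0 < z ≤ 1`, the `(2m+2)`-fold convolution of `f`
satisfies `f^{*(2m+2)}(z) = (π/4)^(m+1)·z^m / m!`. -/
theorem even_fold_conv_eq (m : ℕ) (z : ℝ) (hz0 : 0 < z) (hz1 : z ≤ 1) :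
    nconv (2 * m + 2) z = (π / 4) ^ (m + 1) * z ^ m / (m.factorial : ℝ) := by
  have h := (main_ind m).1 z hz0 hz1
  rw [h, Real.rpow_natCast]
  ring
end
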